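/- Erasure preserves typing: if Δ;Γ ⊢_λhc M : A | s in the calculus λhc, then |Δ|;|Γ| ⊢_λhs |M| : |A| in the simplified calculus λhs. -/

import Mathlib

/- The simplified calculus λhs, in locally nameless style (two separate
   namespaces: simple variables and audited variables). -/

namespace LHS

/-- Trail-constructor labels. -/
inductive Lab : Type
| rfl | trn | bet | betb | ti | lam | app | lett | tnil | tcons | dflt
deriving DecidableEq

/-- λhs types: atomic P, functions, audited unit □τ. -/
inductive Ty : Type
| base : ℕ → Ty
| arr : Ty → Ty → Ty
| box : Ty → Ty
deriving DecidableEq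

mutual
/-- λhs terms (locally nameless: bound variables are de Bruijn indices,
    free variables are names; simple and audited variables are separate). -/
inductive Tm : Type
| bvar : ℕ → Tm          -- bound simple variable
| fvar : ℕ → Tm          -- free simple variable a
| bavar : ℕ → Tm         -- bound audited variable
| favar : ℕ → Tm         -- free audited variable u
| lam : Ty → Tm → Tm     -- λa^τ.s (binds a simple variable)
| app : Tm → Tm → Tm
| bang : Tm → Tm         -- !s
| lett : Ty → Tm → Tm → Tm  -- let(u^τ := s, t) (binds an audited variable in t)
| ti : Br → Tm           -- trail inspection with finite branch map
/-- Finite inspection-branch maps, as association lists. -/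
inductive Br : Type
| nil : Br
| cons : Lab → Tm → Br → Br
end

/-- Domain of a branch map. -/
def Br.dom : Br → List Lab
| .nil => []
| .cons ψ _ θ => ψ :: Br.dom θ

/-- Lookup in a branch map. -/
def Br.lookup : Br → Lab → Option Tm
| .nil, _ => none
| .cons ψ t θ, ψ' => if ψ = ψ' then some t else Br.lookup θ ψ'

/-- Branch selection: θ(ψ) if ψ ∈ dom(θ), otherwise the default branch θ(d). -/
def Br.sel (θ : Br) (ψ : Lab) : Tm :=
  match θ.lookup ψ with
  | some t => t
  | none => (θ.lookup Lab.dflt).getD (Tm.bvar 0)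

mutual
/-- Opening: instantiate bound simple variable k with r. Like simple substitution,
    it does not descend under bangs. -/
def openS (k : ℕ) (r : Tm) : Tm → Tm
| .bvar i => if i = k then r else .bvar i
| .fvar a => .fvar a
| .bavar i => .bavar i
| .favar u => .favar u
| .lam τ s => .lam τ (openS (k+1) r s)
| .app s t => .app (openS k r s) (openS k r t)
| .bang s => .bang s
| .lett τ s t => .lett τ (openS k r s) (openS k r t)
| .ti θ => .ti (openSBr k r θ)
def openSBr (k : ℕ) (r : Tm) : Br → Br
| .nil => .nil
| .cons ψ t θ => .cons ψ (openS k r t) (openSBr k r θ)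
end

mutual
/-- Opening: instantiate bound audited variable k with r. -/
def openA (k : ℕ) (r : Tm) : Tm → Tm
| .bvar i => .bvar i
| .fvar a => .fvar a
| .bavar i => if i = k then r else .bavar i
| .favar u => .favar u
| .lam τ s => .lam τ (openA k r s)
| .app s t => .app (openA k r s) (openA k r t)
| .bang s => .bang (openA k r s)
| .lett τ s t => .lett τ (openA k r s) (openA (k+1) r t)
| .ti θ => .ti (openABr k r θ)
def openABr (k : ℕ) (r : Tm) : Br → Br
| .nil => .nil
| .cons ψ t θ => .cons ψ (openA k r t) (openABr k r θ)
end

mutual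
/-- Closing: abstract the free audited variable u as bound index k. -/
def closeA (k : ℕ) (u : ℕ) : Tm → Tm
| .bvar i => .bvar i
| .fvar a => .fvar a
| .bavar i => .bavar i
| .favar v => if v = u then .bavar k else .favar v
| .lam τ s => .lam τ (closeA k u s)
| .app s t => .app (closeA k u s) (closeA k u t)
| .bang s => .bang (closeA k u s)
| .lett τ s t => .lett τ (closeA k u s) (closeA (k+1) u t)
| .ti θ => .ti (closeABr k u θ)
def closeABr (k : ℕ) (u : ℕ) : Br → Br
| .nil => .nil
| .cons ψ t θ => .cons ψ (closeA k u t) (closeABr k u θ)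
end

mutual
/-- Simple variable substitution s[r/a]: capture-avoiding (locally nameless);
    it does not descend under bangs. -/
def substS (a : ℕ) (r : Tm) : Tm → Tm
| .bvar i => .bvar i
| .fvar b => if b = a then r else .fvar b
| .bavar i => .bavar i
| .favar u => .favar u
| .lam τ s => .lam τ (substS a r s)
| .app s t => .app (substS a r s) (substS a r t)
| .bang s => .bang s
| .lett τ s t => .lett τ (substS a r s) (substS a r t)
| .ti θ => .ti (substSBr a r θ)
def substSBr (a : ℕ) (r : Tm) : Br → Br
| .nil => .nil
| .cons ψ t θ => .cons ψ (substS a r t) (substSBr a r θ)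
end

mutual
/-- Audited variable substitution s[r/u]: capture-avoiding (locally nameless);
    it descends under bangs. -/
def substA (u : ℕ) (r : Tm) : Tm → Tm
| .bvar i => .bvar i
| .fvar a => .fvar a
| .bavar i => .bavar i
| .favar v => if v = u then r else .favar v
| .lam τ s => .lam τ (substA u r s)
| .app s t => .app (substA u r s) (substA u r t)
| .bang s => .bang (substA u r s)
| .lett τ s t => .lett τ (substA u r s) (substA u r t)
| .ti θ => .ti (substABr u r θ)
def substABr (u : ℕ) (r : Tm) : Br → Br
| .nil => .nil
| .cons ψ t θ => .cons ψ (substA u r t) (substABr u r θ)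
end

mutual
/-- Free simple variables. -/
def fvS : Tm → List ℕ
| .bvar _ => []
| .fvar a => [a]
| .bavar _ => []
| .favar _ => []
| .lam _ s => fvS s
| .app s t => fvS s ++ fvS t
| .bang s => fvS s
| .lett _ s t => fvS s ++ fvS t
| .ti θ => fvSBr θ
def fvSBr : Br → List ℕ
| .nil => []
| .cons _ t θ => fvS t ++ fvSBr θ
end

mutual
/-- Free audited variables. -/
def fvA : Tm → List ℕ
| .bvar _ => []
| .fvar _ => []
| .bavar _ => []
| .favar u => [u]
| .lam _ s => fvA s
| .app s t => fvA s ++ fvA t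
| .bang s => fvA s
| .lett _ s t => fvA s ++ fvA t
| .ti θ => fvABr θ
def fvABr : Br → List ℕ
| .nil => []
| .cons _ t θ => fvA t ++ fvABr θ
end

mutual
/-- λhs trails (obtained from λhc trails by replacing codes with λhs terms). -/
inductive Tr : Type
| rfl : Tm → Tr
| trn : Tr → Tr → Tr
| bet : Ty → Tm → Tm → Tr          -- β(a^τ.s, t) (s binds a simple variable)
| betb : Tm → Ty → Tm → Tr         -- β□(s, u^τ.t) (t binds an audited variable)
| ti : Tr → Br → Tr
| lam : Ty → Tr → Tr
| app : Tr → Tr → Tr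
| lett : Tr → Ty → Tr → Tr
| trpl : TrBr → Tr
inductive TrBr : Type
| nil : TrBr
| cons : Lab → Tr → TrBr → TrBr
end

mutual
/-- The fold qθ of inspection branches θ over a trail q. -/
def fold (θ : Br) : Tr → Tm
| .rfl _ => θ.sel .rfl
| .trn q q' => .app (.app (θ.sel .trn) (fold θ q)) (fold θ q')
| .bet _ _ _ => θ.sel .bet
| .betb _ _ _ => θ.sel .betb
| .ti _ _ => θ.sel .ti
| .lam _ q => .app (θ.sel .lam) (fold θ q)
| .app q q' => .app (.app (θ.sel .app) (fold θ q)) (fold θ q')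
| .lett q _ q' => .app (.app (θ.sel .lett) (fold θ q)) (fold θ q')
| .trpl ζ => foldBr θ ζ
def foldBr (θ : Br) : TrBr → Tm
| .nil => θ.sel .tnil
| .cons _ q ζ => .app (.app (θ.sel .tcons) (fold θ q)) (foldBr θ ζ)
end

mutual
/-- One-step reduction of λhs: the closure under all term contexts (including
    under bang and inside inspection branches) of β, β□, and nondeterministic
    trail inspection. -/
inductive Red : Tm → Tm → Prop
| beta (τ : Ty) (s t : Tm) : Red (.app (.lam τ s) t) (openS 0 t s)
| betaBox (τ : Ty) (s t : Tm) : Red (.lett τ (.bang s) t) (openA 0 s t)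
| tinsp (q : Tr) (θ : Br) : Red (.ti θ) (fold θ q)
| lam {s t : Tm} (τ : Ty) : Red s t → Red (.lam τ s) (.lam τ t)
| appL {s t : Tm} (r : Tm) : Red s t → Red (.app s r) (.app t r)
| appR {s t : Tm} (r : Tm) : Red s t → Red (.app r s) (.app r t)
| bang {s t : Tm} : Red s t → Red (.bang s) (.bang t)
| lettL {s t : Tm} (τ : Ty) (r : Tm) : Red s t → Red (.lett τ s r) (.lett τ t r)
| lettR {s t : Tm} (τ : Ty) (r : Tm) : Red s t → Red (.lett τ r s) (.lett τ r t)
| ti {θ θ' : Br} : RedBr θ θ' → Red (.ti θ) (.ti θ')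
inductive RedBr : Br → Br → Prop
| here {s t : Tm} (ψ : Lab) (θ : Br) : Red s t → RedBr (.cons ψ s θ) (.cons ψ t θ)
| there {θ θ' : Br} (ψ : Lab) (s : Tm) : RedBr θ θ' → RedBr (.cons ψ s θ) (.cons ψ s θ')
end

/-- Strong normalization: no infinite reduction sequence starting from s. -/
def SN (s : Tm) : Prop :=
  ¬ ∃ f : ℕ → Tm, f 0 = s ∧ ∀ n, Red (f n) (f (n+1))

def SNset : Set Tm := {s | SN s}

/-- Neutral terms: not a λ-abstraction and not a bang. -/
def Neutral : Tm → Prop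
| .lam _ _ => False
| .bang _ => False
| _ => True

/-- Girard's reducibility candidates. -/
def CR (C : Set Tm) : Prop :=
  C ⊆ SNset ∧
  (∀ s t, s ∈ C → Red s t → t ∈ C) ∧
  (∀ s, Neutral s → (∀ t, Red s t → t ∈ C) → s ∈ C)

/-- Pre-candidates: CR1 and CR2 only. -/
def PCR (C : Set Tm) : Prop :=
  C ⊆ SNset ∧ (∀ s t, s ∈ C → Red s t → t ∈ C)

/-- The substitutive sub-candidate C⟨u↦D⟩. -/
def subCand (C : Set Tm) (u : ℕ) (D : Set Tm) : Set Tm :=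
  {s | s ∈ C ∧ ∀ t ∈ D, substA u t s ∈ C}

/-- Reducible sets Red(τ). -/
def RedSet : Ty → Set Tm
| .base _ => SNset
| .arr τ σ => {s | ∀ t ∈ RedSet τ, Tm.app s t ∈ RedSet σ}
| .box τ => {s | ∀ (u : ℕ) (C : Set Tm), CR C →
    ∀ t ∈ subCand C u (RedSet τ), Tm.lett τ s (closeA 0 u t) ∈ C}

/-- Branch typing function T^σ. -/
def TB (σ : Ty) : Lab → Ty
| .lam => .arr σ σ
| .trn => .arr σ (.arr σ σ)
| .app => .arr σ (.arr σ σ)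
| .lett => .arr σ (.arr σ σ)
| .tcons => .arr σ (.arr σ σ)
| _ => σ

abbrev Ctx := List (ℕ × Ty)

mutual
/-- λhs typing judgment Δ;Γ ⊢ s : τ. -/
inductive Tp : Ctx → Ctx → Tm → Ty → Prop
| var {Δ Γ : Ctx} {a : ℕ} {τ : Ty} : (a, τ) ∈ Γ → Tp Δ Γ (.fvar a) τ
| avar {Δ Γ : Ctx} {u : ℕ} {τ : Ty} : (u, τ) ∈ Δ → Tp Δ Γ (.favar u) τ
| lam {Δ Γ : Ctx} {τ σ : Ty} {s : Tm} (L : Finset ℕ) :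
    (∀ a ∉ L, Tp Δ ((a, τ) :: Γ) (openS 0 (.fvar a) s) σ) →
    Tp Δ Γ (.lam τ s) (.arr τ σ)
| app {Δ Γ : Ctx} {τ σ : Ty} {s t : Tm} :
    Tp Δ Γ s (.arr τ σ) → Tp Δ Γ t τ → Tp Δ Γ (.app s t) σ
| bang {Δ Γ : Ctx} {τ : Ty} {s : Tm} :
    Tp Δ [] s τ → Tp Δ Γ (.bang s) (.box τ)
| lett {Δ Γ : Ctx} {τ σ : Ty} {s t : Tm} (L : Finset ℕ) :
    Tp Δ Γ s (.box τ) →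
    (∀ u ∉ L, Tp ((u, τ) :: Δ) Γ (openA 0 (.favar u) t) σ) →
    Tp Δ Γ (.lett τ s t) σ
| ti {Δ Γ : Ctx} {σ : Ty} {θ : Br} :
    Lab.dflt ∈ θ.dom → TpBr Δ θ σ → Tp Δ Γ (.ti θ) σ
/-- Typing of inspection branch maps: each branch θ(ψ) is closed and has type T^σ(ψ). -/
inductive TpBr : Ctx → Br → Ty → Prop
| nil {Δ : Ctx} {σ : Ty} : TpBr Δ .nil σ
| cons {Δ : Ctx} {σ : Ty} {ψ : Lab} {t : Tm} {θ : Br} :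
    Tp Δ [] t (TB σ ψ) → TpBr Δ θ σ → TpBr Δ (.cons ψ t θ) σ
end

mutual
/-- Simultaneous (capture-avoiding) substitution of terms for free simple
    and audited variables; the simple component does not act under bangs. -/
def msub (σS σA : ℕ → Option Tm) : Tm → Tm
| .bvar i => .bvar i
| .fvar a => (σS a).getD (.fvar a)
| .bavar i => .bavar i
| .favar u => (σA u).getD (.favar u)
| .lam τ s => .lam τ (msub σS σA s)
| .app s t => .app (msub σS σA s) (msub σS σA t)
| .bang s => .bang (msub (fun _ => none) σA s)
| .lett τ s t => .lett τ (msub σS σA s) (msub σS σA t)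
| .ti θ => .ti (msubBr σS σA θ)
def msubBr (σS σA : ℕ → Option Tm) : Br → Br
| .nil => .nil
| .cons ψ t θ => .cons ψ (msub σS σA t) (msubBr σS σA θ)
end

/-- A (Δ;Γ)-adapted interpretation: a simultaneous substitution defined exactly
    on dom(Δ) ∪ dom(Γ) sending each declared variable into the corresponding
    reducible set. -/
def Adapted (Δ Γ : Ctx) (σS σA : ℕ → Option Tm) : Prop :=
  (∀ a, (σS a).isSome ↔ ∃ τ, (a, τ) ∈ Γ) ∧
  (∀ u, (σA u).isSome ↔ ∃ τ, (u, τ) ∈ Δ) ∧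
  (∀ a τ t, (a, τ) ∈ Γ → σS a = some t → t ∈ RedSet τ) ∧
  (∀ u τ t, (u, τ) ∈ Δ → σA u = some t → t ∈ RedSet τ)

end LHS
/- The calculus λhc, in locally nameless style. -/

namespace LHC

/-- Trail-constructor labels. -/
inductive Lab : Type
| rfl | trn | bet | betb | ti | lam | app | lett | tnil | tcons | dflt
deriving DecidableEq

mutual
/-- λhc types: atomic P, functions A ⊃ B, audited units [s]A. -/
inductive CTy : Type
| base : ℕ → CTy
| arr : CTy → CTy → CTy
| au : Code → CTy → CTy
/-- λhc codes. -/
inductive Code : Type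
| bvar : ℕ → Code           -- bound simple variable
| fvar : ℕ → Code           -- free simple variable
| bavar : ℕ → Code          -- bound audited variable
| favar : ℕ → Code          -- free audited variable
| lam : CTy → Code → Code   -- λa^A.s
| app : Code → Code → Code
| bang : Code → Code        -- !s
| lett : CTy → Code → Code → Code  -- let(u^A := s, t), binding an audited variable in t
| ti : CBr → Code           -- trail inspection
/-- Inspection branch maps (finite maps from labels to codes), as association lists. -/
inductive CBr : Type
| nil : CBr
| cons : Lab → Code → CBr → CBr
end

def CBr.dom : CBr → List Lab
| .nil => []
| .cons ψ _ θ => ψ :: CBr.dom θ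

def CBr.lookup : CBr → Lab → Option Code
| .nil, _ => none
| .cons ψ s θ, ψ' => if ψ = ψ' then some s else CBr.lookup θ ψ'

/-- Branch selection: θ(ψ) if defined, else the default branch θ(d). -/
def CBr.sel (θ : CBr) (ψ : Lab) : Code :=
  match θ.lookup ψ with
  | some s => s
  | none => (θ.lookup Lab.dflt).getD (Code.bvar 0)

mutual
/-- Simple-variable opening on types (traversing to the codes they contain). -/
def openSTy (k : ℕ) (r : Code) : CTy → CTy
| .base n => .base n
| .arr A B => .arr (openSTy k r A) (openSTy k r B)
| .au s A => .au (openSC k r s) (openSTy k r A)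
/-- Simple-variable opening on codes: instantiate bound simple variable k with r.
    Following the definition of simple substitution, it does not descend under bangs. -/
def openSC (k : ℕ) (r : Code) : Code → Code
| .bvar i => if i = k then r else .bvar i
| .fvar a => .fvar a
| .bavar i => .bavar i
| .favar u => .favar u
| .lam A s => .lam (openSTy k r A) (openSC (k+1) r s)
| .app s t => .app (openSC k r s) (openSC k r t)
| .bang s => .bang s
| .lett A s t => .lett (openSTy k r A) (openSC k r s) (openSC k r t)
| .ti θ => .ti (openSBr k r θ)
def openSBr (k : ℕ) (r : Code) : CBr → CBr
| .nil => .nil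
| .cons ψ s θ => .cons ψ (openSC k r s) (openSBr k r θ)
end

mutual
/-- Audited-variable opening on types. -/
def openATy (k : ℕ) (r : Code) : CTy → CTy
| .base n => .base n
| .arr A B => .arr (openATy k r A) (openATy k r B)
| .au s A => .au (openAC k r s) (openATy k r A)
/-- Audited-variable opening on codes: instantiate bound audited variable k with r;
    it descends under bangs. -/
def openAC (k : ℕ) (r : Code) : Code → Code
| .bvar i => .bvar i
| .fvar a => .fvar a
| .bavar i => if i = k then r else .bavar i
| .favar u => .favar u
| .lam A s => .lam (openATy k r A) (openAC k r s)
| .app s t => .app (openAC k r s) (openAC k r t)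
| .bang s => .bang (openAC k r s)
| .lett A s t => .lett (openATy k r A) (openAC k r s) (openAC (k+1) r t)
| .ti θ => .ti (openABr k r θ)
def openABr (k : ℕ) (r : Code) : CBr → CBr
| .nil => .nil
| .cons ψ s θ => .cons ψ (openAC k r s) (openABr k r θ)
end

mutual
/-- λhc trails. -/
inductive CTr : Type
| rfl : Code → CTr                -- reflexivity (annotated with its code)
| trn : CTr → CTr → CTr           -- transitivity
| bet : CTy → Code → Code → CTr   -- β(a^A.s, t): s binds a simple variable
| betb : Code → CTy → Code → CTr  -- β□(s, u^A.t): t binds an audited variable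
| ti : CTr → CBr → CTr            -- trail inspection reduction
| lam : CTy → CTr → CTr           -- congruence wrt λ (binds a simple variable)
| app : CTr → CTr → CTr           -- congruence wrt application
| lett : CTr → CTy → CTr → CTr    -- congruence wrt let (binds an audited variable in the second trail)
| trpl : CTrBr → CTr              -- congruence wrt trail inspection
/-- Branch maps of trails. -/
inductive CTrBr : Type
| nil : CTrBr
| cons : Lab → CTr → CTrBr → CTrBr
end

def CTrBr.dom : CTrBr → List Lab
| .nil => []
| .cons ψ _ ζ => ψ :: CTrBr.dom ζ

mutual
/-- Simple-variable opening on trails. -/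
def openSTr (k : ℕ) (r : Code) : CTr → CTr
| .rfl s => .rfl (openSC k r s)
| .trn q q' => .trn (openSTr k r q) (openSTr k r q')
| .bet A s t => .bet (openSTy k r A) (openSC (k+1) r s) (openSC k r t)
| .betb s A t => .betb (openSC k r s) (openSTy k r A) (openSC k r t)
| .ti q θ => .ti (openSTr k r q) (openSBr k r θ)
| .lam A q => .lam (openSTy k r A) (openSTr (k+1) r q)
| .app q q' => .app (openSTr k r q) (openSTr k r q')
| .lett q A q' => .lett (openSTr k r q) (openSTy k r A) (openSTr k r q')
| .trpl ζ => .trpl (openSTrBr k r ζ)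
def openSTrBr (k : ℕ) (r : Code) : CTrBr → CTrBr
| .nil => .nil
| .cons ψ q ζ => .cons ψ (openSTr k r q) (openSTrBr k r ζ)
end

mutual
/-- Audited-variable opening on trails. -/
def openATr (k : ℕ) (r : Code) : CTr → CTr
| .rfl s => .rfl (openAC k r s)
| .trn q q' => .trn (openATr k r q) (openATr k r q')
| .bet A s t => .bet (openATy k r A) (openAC k r s) (openAC k r t)
| .betb s A t => .betb (openAC k r s) (openATy k r A) (openAC (k+1) r t)
| .ti q θ => .ti (openATr k r q) (openABr k r θ)
| .lam A q => .lam (openATy k r A) (openATr k r q)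
| .app q q' => .app (openATr k r q) (openATr k r q')
| .lett q A q' => .lett (openATr k r q) (openATy k r A) (openATr (k+1) r q')
| .trpl ζ => .trpl (openATrBr k r ζ)
def openATrBr (k : ℕ) (r : Code) : CTrBr → CTrBr
| .nil => .nil
| .cons ψ q ζ => .cons ψ (openATr k r q) (openATrBr k r ζ)
end

mutual
/-- The fold qθ of code branches θ over a trail q. -/
def cfold (θ : CBr) : CTr → Code
| .rfl _ => θ.sel .rfl
| .trn q q' => .app (.app (θ.sel .trn) (cfold θ q)) (cfold θ q')
| .bet _ _ _ => θ.sel .bet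
| .betb _ _ _ => θ.sel .betb
| .ti _ _ => θ.sel .ti
| .lam _ q => .app (θ.sel .lam) (cfold θ q)
| .app q q' => .app (.app (θ.sel .app) (cfold θ q)) (cfold θ q')
| .lett q _ q' => .app (.app (θ.sel .lett) (cfold θ q)) (cfold θ q')
| .trpl ζ => cfoldBr θ ζ
def cfoldBr (θ : CBr) : CTrBr → Code
| .nil => θ.sel .tnil
| .cons _ q ζ => .app (.app (θ.sel .tcons) (cfold θ q)) (cfoldBr θ ζ)
end

mutual
/-- The source of a trail. -/
def srcC : CTr → Code
| .rfl s => s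
| .trn q _ => srcC q
| .bet A s t => .app (.lam A s) t
| .betb s A t => .lett A (.bang s) t
| .ti _ θ => .ti θ
| .lam A q => .lam A (srcC q)
| .app q q' => .app (srcC q) (srcC q')
| .lett q A q' => .lett A (srcC q) (srcC q')
| .trpl ζ => .ti (srcBr ζ)
def srcBr : CTrBr → CBr
| .nil => .nil
| .cons ψ q ζ => .cons ψ (srcC q) (srcBr ζ)
end

mutual
/-- The target of a trail. -/
def tgtC : CTr → Code
| .rfl s => s
| .trn _ q' => tgtC q'
| .bet _ s t => openSC 0 t s
| .betb s _ t => openAC 0 s t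
| .ti q θ => cfold θ q
| .lam A q => .lam A (tgtC q)
| .app q q' => .app (tgtC q) (tgtC q')
| .lett q A q' => .lett A (tgtC q) (tgtC q')
| .trpl ζ => .ti (tgtBr ζ)
def tgtBr : CTrBr → CBr
| .nil => .nil
| .cons ψ q ζ => .cons ψ (tgtC q) (tgtBr ζ)
end

/-- Branch typing function T^B. -/
def TBc (B : CTy) : Lab → CTy
| .lam => .arr B B
| .trn => .arr B (.arr B B)
| .app => .arr B (.arr B B)
| .lett => .arr B (.arr B B)
| .tcons => .arr B (.arr B B)
| _ => B

abbrev CCtx' := List (ℕ × CTy)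

mutual
/-- Typing of λhc codes: Δ;Γ ⊢ s : A. -/
inductive CodeTp : CCtx' → CCtx' → Code → CTy → Prop
| var {Δ Γ : CCtx'} {a : ℕ} {A : CTy} : (a, A) ∈ Γ → CodeTp Δ Γ (.fvar a) A
| avar {Δ Γ : CCtx'} {u : ℕ} {A : CTy} : (u, A) ∈ Δ → CodeTp Δ Γ (.favar u) A
| lam {Δ Γ : CCtx'} {A B : CTy} {s : Code} (L : Finset ℕ) :
    (∀ a ∉ L, CodeTp Δ ((a, A) :: Γ) (openSC 0 (.fvar a) s) B) →
    CodeTp Δ Γ (.lam A s) (.arr A B)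
| app {Δ Γ : CCtx'} {A B : CTy} {s t : Code} :
    CodeTp Δ Γ s (.arr A B) → CodeTp Δ Γ t A → CodeTp Δ Γ (.app s t) B
| bang {Δ Γ : CCtx'} {A : CTy} {t : Code} :
    CodeTp Δ [] t A → CodeTp Δ Γ (.bang t) (.au t A)
| lett {Δ Γ : CCtx'} {A C : CTy} {r s t : Code} (L : Finset ℕ) :
    CodeTp Δ Γ s (.au r A) →
    (∀ u ∉ L, CodeTp ((u, A) :: Δ) Γ (openAC 0 (.favar u) t) (openATy 0 (.favar u) C)) →
    CodeTp Δ Γ (.lett A s t) (openATy 0 r C)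
| ti {Δ Γ : CCtx'} {B : CTy} {θ : CBr} :
    Lab.dflt ∈ θ.dom → CBrTp Δ θ B → CodeTp Δ Γ (.ti θ) B
/-- Typing of inspection branch maps: each branch is closed and has type T^B(ψ). -/
inductive CBrTp : CCtx' → CBr → CTy → Prop
| nil {Δ : CCtx'} {B : CTy} : CBrTp Δ .nil B
| cons {Δ : CCtx'} {B : CTy} {ψ : Lab} {s : Code} {θ : CBr} :
    CodeTp Δ [] s (TBc B ψ) → CBrTp Δ θ B → CBrTp Δ (.cons ψ s θ) B
end

mutual
/-- Typing of λhc trails: Δ;Γ ⊢ q : s ▷=_A t. -/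
inductive TrailTp : CCtx' → CCtx' → CTr → Code → CTy → Code → Prop
| rfl {Δ Γ : CCtx'} {s : Code} {A : CTy} :
    CodeTp Δ Γ s A → TrailTp Δ Γ (.rfl s) s A s
| trn {Δ Γ : CCtx'} {q₁ q₂ : CTr} {r s t : Code} {A : CTy} :
    TrailTp Δ Γ q₁ r A s → TrailTp Δ Γ q₂ s A t → TrailTp Δ Γ (.trn q₁ q₂) r A t
| bet {Δ Γ : CCtx'} {A B : CTy} {s t : Code} (L : Finset ℕ) :
    (∀ a ∉ L, CodeTp Δ ((a, A) :: Γ) (openSC 0 (.fvar a) s) B) →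
    CodeTp Δ Γ t A →
    TrailTp Δ Γ (.bet A s t) (.app (.lam A s) t) B (openSC 0 t s)
| betb {Δ Γ : CCtx'} {A C : CTy} {s t : Code} (L : Finset ℕ) :
    CodeTp Δ [] s A →
    (∀ u ∉ L, CodeTp ((u, A) :: Δ) Γ (openAC 0 (.favar u) t) (openATy 0 (.favar u) C)) →
    TrailTp Δ Γ (.betb s A t) (.lett A (.bang s) t) (openATy 0 s C) (openAC 0 s t)
| ti {Δ Γ : CCtx'} {A B : CTy} {q : CTr} {s t : Code} {θ : CBr} :
    Lab.dflt ∈ θ.dom → TrailTp Δ [] q s A t → CBrTp Δ θ B →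
    TrailTp Δ Γ (.ti q θ) (.ti θ) B (cfold θ q)
| lam {Δ Γ : CCtx'} {A B : CTy} {q : CTr} {s t : Code} (L : Finset ℕ) :
    (∀ a ∉ L, TrailTp Δ ((a, A) :: Γ) (openSTr 0 (.fvar a) q)
        (openSC 0 (.fvar a) s) B (openSC 0 (.fvar a) t)) →
    TrailTp Δ Γ (.lam A q) (.lam A s) (.arr A B) (.lam A t)
| app {Δ Γ : CCtx'} {A B : CTy} {q₁ q₂ : CTr} {s₁ s₂ t₁ t₂ : Code} :
    TrailTp Δ Γ q₁ s₁ (.arr A B) t₁ → TrailTp Δ Γ q₂ s₂ A t₂ →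
    TrailTp Δ Γ (.app q₁ q₂) (.app s₁ s₂) B (.app t₁ t₂)
| lett {Δ Γ : CCtx'} {A C : CTy} {q₁ q₂ : CTr} {r s₁ s₂ t₁ t₂ : Code} (L : Finset ℕ) :
    TrailTp Δ Γ q₁ s₁ (.au r A) t₁ →
    (∀ u ∉ L, TrailTp ((u, A) :: Δ) Γ (openATr 0 (.favar u) q₂)
        (openAC 0 (.favar u) s₂) (openATy 0 (.favar u) C) (openAC 0 (.favar u) t₂)) →
    TrailTp Δ Γ (.lett q₁ A q₂) (.lett A s₁ s₂) (openATy 0 r C) (.lett A t₁ t₂)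
| trpl {Δ Γ : CCtx'} {B : CTy} {ζ : CTrBr} {θ θ' : CBr} :
    Lab.dflt ∈ ζ.dom → TrBrTp Δ ζ θ B θ' →
    TrailTp Δ Γ (.trpl ζ) (.ti θ) B (.ti θ')
/-- Pointwise typing of trail branch maps (with equal domains). -/
inductive TrBrTp : CCtx' → CTrBr → CBr → CTy → CBr → Prop
| nil {Δ : CCtx'} {B : CTy} : TrBrTp Δ .nil .nil B .nil
| cons {Δ : CCtx'} {B : CTy} {ψ : Lab} {q : CTr} {s t : Code} {ζ : CTrBr} {θ θ' : CBr} :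
    TrailTp Δ [] q s (TBc B ψ) t → TrBrTp Δ ζ θ B θ' →
    TrBrTp Δ (.cons ψ q ζ) (.cons ψ s θ) B (.cons ψ t θ')
end

/-- s ⇝ t: there is a well-typed trail witnessing that s reduces to t. -/
def Leads (s t : Code) : Prop :=
  ∃ (Δ Γ : CCtx') (q : CTr) (A : CTy), TrailTp Δ Γ q s A t

/-- A code is in normal form iff it does not reduce to any other code. -/
def CodeNF (s : Code) : Prop := ¬ ∃ t, t ≠ s ∧ Leads s t

end LHC

namespace LHC

mutual
/-- λhc terms: like codes, but box introduction carries a trail. -/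
inductive CTm : Type
| bvar : ℕ → CTm
| fvar : ℕ → CTm
| bavar : ℕ → CTm
| favar : ℕ → CTm
| lam : CTy → CTm → CTm
| app : CTm → CTm → CTm
| bang : CTr → CTm → CTm        -- !_q M
| lett : CTy → CTm → CTm → CTm
| ti : CTmBr → CTm
/-- Inspection branch maps for terms. -/
inductive CTmBr : Type
| nil : CTmBr
| cons : Lab → CTm → CTmBr → CTmBr
end

def CTmBr.dom : CTmBr → List Lab
| .nil => []
| .cons ψ _ ϑ => ψ :: CTmBr.dom ϑ

mutual
/-- The code of a term: replace every !_q N by !src(q). -/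
def codeOf : CTm → Code
| .bvar i => .bvar i
| .fvar a => .fvar a
| .bavar i => .bavar i
| .favar u => .favar u
| .lam A M => .lam A (codeOf M)
| .app M N => .app (codeOf M) (codeOf N)
| .bang q _ => .bang (srcC q)
| .lett A M N => .lett A (codeOf M) (codeOf N)
| .ti ϑ => .ti (codeOfBr ϑ)
def codeOfBr : CTmBr → CBr
| .nil => .nil
| .cons ψ M ϑ => .cons ψ (codeOf M) (codeOfBr ϑ)
end

mutual
/-- Simple-variable opening on terms (not descending under bangs, like simple substitution). -/
def topenS (k : ℕ) (r : CTm) : CTm → CTm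
| .bvar i => if i = k then r else .bvar i
| .fvar a => .fvar a
| .bavar i => .bavar i
| .favar u => .favar u
| .lam A M => .lam A (topenS (k+1) r M)
| .app M N => .app (topenS k r M) (topenS k r N)
| .bang q M => .bang q M
| .lett A M N => .lett A (topenS k r M) (topenS k r N)
| .ti ϑ => .ti (topenSBr k r ϑ)
def topenSBr (k : ℕ) (r : CTm) : CTmBr → CTmBr
| .nil => .nil
| .cons ψ M ϑ => .cons ψ (topenS k r M) (topenSBr k r ϑ)
end

mutual
/-- Opening of the bound audited variable k as the free audited variable u, in a term
    (descending under bangs, and into trail and type annotations). -/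
def topenAV (k : ℕ) (u : ℕ) : CTm → CTm
| .bvar i => .bvar i
| .fvar a => .fvar a
| .bavar i => if i = k then .favar u else .bavar i
| .favar v => .favar v
| .lam A M => .lam (openATy k (.favar u) A) (topenAV k u M)
| .app M N => .app (topenAV k u M) (topenAV k u N)
| .bang q M => .bang (openATr k (.favar u) q) (topenAV k u M)
| .lett A M N => .lett (openATy k (.favar u) A) (topenAV k u M) (topenAV (k+1) u N)
| .ti ϑ => .ti (topenAVBr k u ϑ)
def topenAVBr (k : ℕ) (u : ℕ) : CTmBr → CTmBr
| .nil => .nil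
| .cons ψ M ϑ => .cons ψ (topenAV k u M) (topenAVBr k u ϑ)
end

mutual
/-- Typing of λhc terms: Δ;Γ ⊢ M : A | s. -/
inductive TermTp : CCtx' → CCtx' → CTm → CTy → Code → Prop
| var {Δ Γ : CCtx'} {a : ℕ} {A : CTy} : (a, A) ∈ Γ → TermTp Δ Γ (.fvar a) A (.fvar a)
| avar {Δ Γ : CCtx'} {u : ℕ} {A : CTy} : (u, A) ∈ Δ → TermTp Δ Γ (.favar u) A (.favar u)
| lam {Δ Γ : CCtx'} {A B : CTy} {M : CTm} {s : Code} (L : Finset ℕ) :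
    (∀ a ∉ L, TermTp Δ ((a, A) :: Γ) (topenS 0 (.fvar a) M) B (openSC 0 (.fvar a) s)) →
    TermTp Δ Γ (.lam A M) (.arr A B) (.lam A s)
| app {Δ Γ : CCtx'} {A B : CTy} {M N : CTm} {s t : Code} :
    TermTp Δ Γ M (.arr A B) s → TermTp Δ Γ N A t → TermTp Δ Γ (.app M N) B (.app s t)
| bang {Δ Γ : CCtx'} {A : CTy} {M : CTm} {q : CTr} {s t : Code} :
    TermTp Δ [] M A t → TrailTp Δ [] q s A t →
    TermTp Δ Γ (.bang q M) (.au s A) (.bang s)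
| lett {Δ Γ : CCtx'} {A C : CTy} {M N : CTm} {r s t : Code} (L : Finset ℕ) :
    TermTp Δ Γ M (.au r A) s →
    (∀ u ∉ L, TermTp ((u, A) :: Δ) Γ (topenAV 0 u N)
        (openATy 0 (.favar u) C) (openAC 0 (.favar u) t)) →
    TermTp Δ Γ (.lett A M N) (openATy 0 r C) (.lett A s t)
| ti {Δ Γ : CCtx'} {B : CTy} {ϑ : CTmBr} {θ : CBr} :
    Lab.dflt ∈ ϑ.dom → TmBrTp Δ ϑ B θ → TermTp Δ Γ (.ti ϑ) B (.ti θ)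
/-- Pointwise typing of term inspection branch maps (with equal domains). -/
inductive TmBrTp : CCtx' → CTmBr → CTy → CBr → Prop
| nil {Δ : CCtx'} {B : CTy} : TmBrTp Δ .nil B .nil
| cons {Δ : CCtx'} {B : CTy} {ψ : Lab} {M : CTm} {s : Code} {ϑ : CTmBr} {θ : CBr} :
    TermTp Δ [] M (TBc B ψ) s → TmBrTp Δ ϑ B θ →
    TmBrTp Δ (.cons ψ M ϑ) B (.cons ψ s θ)
end

end LHC

namespace LHC

/-- Erasure of trail labels. -/
def eraseLab : Lab → LHS.Lab
| .rfl => .rfl | .trn => .trn | .bet => .bet | .betb => .betb | .ti => .ti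
| .lam => .lam | .app => .app | .lett => .lett | .tnil => .tnil | .tcons => .tcons
| .dflt => .dflt

/-- Erasure of types: |P| = P, |A ⊃ B| = |A| ⊃ |B|, |[s]A| = □|A|. -/
def eraseTy : CTy → LHS.Ty
| .base n => .base n
| .arr A B => .arr (eraseTy A) (eraseTy B)
| .au _ A => .box (eraseTy A)

mutual
/-- Erasure of terms: homomorphic, discarding trail annotations (|!_q M| = !|M|). -/
def eraseTm : CTm → LHS.Tm
| .bvar i => .bvar i
| .fvar a => .fvar a
| .bavar i => .bavar i
| .favar u => .favar u
| .lam A M => .lam (eraseTy A) (eraseTm M)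
| .app M N => .app (eraseTm M) (eraseTm N)
| .bang _ M => .bang (eraseTm M)
| .lett A M N => .lett (eraseTy A) (eraseTm M) (eraseTm N)
| .ti ϑ => .ti (eraseBr ϑ)
def eraseBr : CTmBr → LHS.Br
| .nil => .nil
| .cons ψ M ϑ => .cons (eraseLab ψ) (eraseTm M) (eraseBr ϑ)
end

/-- Erasure of typing contexts. -/
def eraseCtx (Γ : CCtx') : LHS.Ctx := Γ.map (fun p => (p.1, eraseTy p.2))

end LHC

/- Induction on the λhc typing derivation. Erasure forgets every code annotation, so it
commutes with opening and sends each λhc typing rule to the λhs rule of the same shape;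
in T-Bang the trail premise is simply dropped, and in T-Let the substituted code r
disappears from the erased result type. -/

namespace LHC

theorem eraseTy_openATy (k : ℕ) (r : Code) (A : CTy) :
    eraseTy (openATy k r A) = eraseTy A := by
  cases A with
  | base n => rfl
  | arr A B => simp only [openATy, eraseTy, eraseTy_openATy]
  | au s A => simp only [openATy, eraseTy, eraseTy_openATy]

theorem eraseTy_TBc (B : CTy) (ψ : Lab) :
    eraseTy (TBc B ψ) = LHS.TB (eraseTy B) (eraseLab ψ) := by
  cases ψ <;> rfl

mutual
theorem eraseTm_topenS (k : ℕ) (r M : CTm) :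
    eraseTm (topenS k r M) = LHS.openS k (eraseTm r) (eraseTm M) := by
  cases M with
  | bvar i => by_cases h : i = k <;> simp [topenS, eraseTm, LHS.openS, h]
  | fvar | bavar | favar | bang => rfl
  | lam A M => simp only [topenS, eraseTm, LHS.openS, eraseTm_topenS]
  | app M N => simp only [topenS, eraseTm, LHS.openS, eraseTm_topenS]
  | lett A M N => simp only [topenS, eraseTm, LHS.openS, eraseTm_topenS]
  | ti ϑ => simp only [topenS, eraseTm, LHS.openS, eraseBr_topenSBr]
theorem eraseBr_topenSBr (k : ℕ) (r : CTm) (ϑ : CTmBr) :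
    eraseBr (topenSBr k r ϑ) = LHS.openSBr k (eraseTm r) (eraseBr ϑ) := by
  cases ϑ with
  | nil => rfl
  | cons ψ M ϑ =>
    simp only [topenSBr, eraseBr, LHS.openSBr, eraseTm_topenS, eraseBr_topenSBr]
end

mutual
theorem eraseTm_topenAV (k u : ℕ) (M : CTm) :
    eraseTm (topenAV k u M) = LHS.openA k (.favar u) (eraseTm M) := by
  cases M with
  | bavar i => by_cases h : i = k <;> simp [topenAV, eraseTm, LHS.openA, h]
  | bvar | fvar | favar => rfl
  | lam A M => simp only [topenAV, eraseTm, LHS.openA, eraseTm_topenAV, eraseTy_openATy]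
  | app M N => simp only [topenAV, eraseTm, LHS.openA, eraseTm_topenAV]
  | bang q M => simp only [topenAV, eraseTm, LHS.openA, eraseTm_topenAV]
  | lett A M N => simp only [topenAV, eraseTm, LHS.openA, eraseTm_topenAV, eraseTy_openATy]
  | ti ϑ => simp only [topenAV, eraseTm, LHS.openA, eraseBr_topenAVBr]
theorem eraseBr_topenAVBr (k u : ℕ) (ϑ : CTmBr) :
    eraseBr (topenAVBr k u ϑ) = LHS.openABr k (.favar u) (eraseBr ϑ) := by
  cases ϑ with
  | nil => rfl
  | cons ψ M ϑ =>
    simp only [topenAVBr, eraseBr, LHS.openABr, eraseTm_topenAV, eraseBr_topenAVBr]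
end

theorem dom_eraseBr (ϑ : CTmBr) : (eraseBr ϑ).dom = ϑ.dom.map eraseLab := by
  cases ϑ with
  | nil => rfl
  | cons ψ M ϑ => simp only [eraseBr, LHS.Br.dom, CTmBr.dom, List.map_cons, dom_eraseBr]

theorem mem_eraseCtx {a : ℕ} {A : CTy} {Γ : CCtx'} (h : (a, A) ∈ Γ) :
    (a, eraseTy A) ∈ eraseCtx Γ :=
  List.mem_map_of_mem h

theorem eraseCtx_cons (a : ℕ) (A : CTy) (Γ : CCtx') :
    eraseCtx ((a, A) :: Γ) = (a, eraseTy A) :: eraseCtx Γ :=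
  rfl

end LHC

open LHC in
/-- Erasure preserves typing: if Δ;Γ ⊢_λhc M : A | s then |Δ|;|Γ| ⊢_λhs |M| : |A|. -/
theorem erasure_preserves_typing (Δ Γ : CCtx') (M : CTm) (A : CTy) (s : Code)
    (h : TermTp Δ Γ M A s) :
    LHS.Tp (eraseCtx Δ) (eraseCtx Γ) (eraseTm M) (eraseTy A) := by
  induction h using TermTp.rec
    (motive_2 := fun Δ ϑ B _ _ => LHS.TpBr (eraseCtx Δ) (eraseBr ϑ) (eraseTy B)) with
  | var h => exact .var (mem_eraseCtx h)
  | avar h => exact .avar (mem_eraseCtx h)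
  | lam L _ ih =>
    refine .lam L fun a ha => ?_
    simpa only [eraseTm_topenS, eraseCtx_cons, eraseTm] using ih a ha
  | app _ _ ih₁ ih₂ => exact .app ih₁ ih₂
  | bang _ _ ih => exact .bang ih
  | lett L _ _ ih₁ ih₂ =>
    rw [eraseTy_openATy]
    refine .lett L ih₁ fun u hu => ?_
    simpa only [eraseTm_topenAV, eraseTy_openATy, eraseCtx_cons] using ih₂ u hu
  | ti hd _ ih => exact .ti (dom_eraseBr _ ▸ List.mem_map_of_mem hd) ih
  | nil => exact .nil
  | cons _ _ ih₁ ih₂ => exact .cons (eraseTy_TBc _ _ ▸ ih₁) ih₂
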